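/- arXiv:1307.2515 — 3 statements merged into one kernel-verified Lean document; each statement's English description precedes it below -/
import Mathlib

section
/- Let M be a compact smooth 2-manifold without boundary and let h : M → R be a smooth function that locally (in coordinates (u,v)) has the form h = (f/g)_v for smooth f, g with g nowhere zero, arising from a globally defined smooth 1-form ω = (f/g) du with h du∧dv = −dω. Then ∫_M h du∧dv = 0; consequently the Willmore functional W(ψ) = (1/2)∫_M ⟨κ₁^ψ,κ₂^ψ⟩ du dv of a globally immersed c-polar transform equals W(y) = (1/2)∫_M ⟨κ₁,κ₂⟩ du dv. -/
/-- On a closed surface (here a torus: doubly periodic data on `ℝ²`, integrated over a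
fundamental domain), the exact correction term `h = (f/g)_v` integrates to zero, so the
Willmore functional of the polar transform, `(1/2)∫∫ (⟨κ₁,κ₂⟩ + h)`, equals
`(1/2)∫∫ ⟨κ₁,κ₂⟩`. -/
theorem stmt_7 (f g k : ℝ → ℝ → ℝ)
    (hf : ContDiff ℝ (⊤ : ℕ∞) (fun p : ℝ × ℝ => f p.1 p.2))
    (hg : ContDiff ℝ (⊤ : ℕ∞) (fun p : ℝ × ℝ => g p.1 p.2))
    (hk : ContDiff ℝ (⊤ : ℕ∞) (fun p : ℝ × ℝ => k p.1 p.2))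
    (hg0 : ∀ u v, g u v ≠ 0)
    (hfper : ∀ u v, f u (v + 1) = f u v) (hgper : ∀ u v, g u (v + 1) = g u v)
    (h : ℝ → ℝ → ℝ)
    (hh : ∀ u v, h u v = deriv (fun v' => f u v' / g u v') v) :
    (∫ u in (0:ℝ)..1, ∫ v in (0:ℝ)..1, h u v) = 0
    ∧ (1/2) * (∫ u in (0:ℝ)..1, ∫ v in (0:ℝ)..1, (k u v + h u v))
      = (1/2) * (∫ u in (0:ℝ)..1, ∫ v in (0:ℝ)..1, k u v) := by
  -- slice smoothness
  have hsl : ∀ u, ContDiff ℝ (⊤ : ℕ∞) (fun v => f u v / g u v) := by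
    intro u
    have hcurve : ContDiff ℝ (⊤ : ℕ∞) (fun v : ℝ => ((u, v) : ℝ × ℝ)) :=
      ContDiff.prodMk contDiff_const contDiff_id
    exact (hf.comp hcurve).div (hg.comp hcurve) (fun v => hg0 u v)
  have hF : ∀ u v, HasDerivAt (fun v' => f u v' / g u v')
      (deriv (fun v' => f u v' / g u v') v) v := by
    intro u v
    exact (((hsl u).differentiable (by simp)) v).hasDerivAt
  have hcont : ∀ u, Continuous (deriv (fun v' => f u v' / g u v')) := by
    intro u
    exact (hsl u).continuous_deriv (by simp)
  -- inner integral of h is zero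
  have hinner : ∀ u, (∫ v in (0:ℝ)..1, h u v) = 0 := by
    intro u
    have : (∫ v in (0:ℝ)..1, h u v)
        = ∫ v in (0:ℝ)..1, deriv (fun v' => f u v' / g u v') v := by
      simp only [hh]
    rw [this, intervalIntegral.integral_deriv_eq_sub (fun v _ => (hF u v).differentiableAt)
      ((hcont u).intervalIntegrable 0 1)]
    have h1 : f u 1 / g u 1 = f u 0 / g u 0 := by
      have := hfper u 0; have := hgper u 0
      simp_all
    rw [h1]; ring
  constructor
  · simp [hinner]
  · congr 1
    apply intervalIntegral.integral_congr
    intro u _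
    have hkc : Continuous (fun v => k u v) := by
      have hcurve : Continuous (fun v : ℝ => ((u, v) : ℝ × ℝ)) :=
        (continuous_const).prodMk continuous_id
      exact hk.continuous.comp hcurve
    have hhc : Continuous (fun v => h u v) := by
      have : (fun v => h u v) = deriv (fun v' => f u v' / g u v') := by
        funext v; exact hh u v
      rw [this]; exact hcont u
    show (∫ v in (0:ℝ)..1, (k u v + h u v)) = ∫ v in (0:ℝ)..1, k u v
    rw [intervalIntegral.integral_add (hkc.intervalIntegrable 0 1)
      (hhc.intervalIntegrable 0 1), hinner u, add_zero]
end

section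
/- Under the conditions (i) ⟨ψ,Y⟩ = ⟨ψ,Y_u⟩ = ⟨ψ,Y_v⟩ = 0 and (ii) ψ_u ∈ Span{Y, Y_v}, ψ_v ∈ Span{Y, Y_u}, where ⟨Y,Y⟩ = ⟨Y_u,Y_u⟩ = ⟨Y_v,Y_v⟩ = 0, ⟨Y_u,Y_v⟩ = 1/2, ⟨Y,Y_u⟩ = ⟨Y,Y_v⟩ = 0, one has ⟨ψ, Y_{uv}⟩ = 0 (so ψ is a normal section) and ⟨ψ,ψ⟩ is constant. -/
/-!
Differentiating `⟨ψ, Y_v⟩ = 0` in `u` gives `⟨ψ_u, Y_v⟩ + ⟨ψ, Y_{uv}⟩ = 0`, and the first term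
vanishes because `ψ_u ∈ Span{Y, Y_v}` while `Y_v ⊥ Y` and `Y_v` is null. Likewise
`∂_u ⟨ψ,ψ⟩ = 2⟨ψ_u, ψ⟩` vanishes since `ψ ⊥ Y, Y_v`, and `∂_v ⟨ψ,ψ⟩ = 2⟨ψ_v, ψ⟩` vanishes since
`ψ ⊥ Y, Y_u`; a function of two real variables with vanishing partial derivatives is constant.
-/

open Submodule

namespace ContinuousLinearMap

variable {E : Type*} [NormedAddCommGroup E] [NormedSpace ℝ E] (L : E →L[ℝ] E →L[ℝ] ℝ)

theorem apply_eq_zero_of_mem_span_pair {a b w z : E} (hw : w ∈ span ℝ {a, b})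
    (ha : L a z = 0) (hb : L b z = 0) : L w z = 0 := by
  obtain ⟨s, t, rfl⟩ := mem_span_pair.1 hw
  simp [ha, hb]

theorem apply_add_apply_eq_zero_of_hasDerivAt {x y : ℝ → E} {x' y' : E} {t : ℝ}
    (hx : HasDerivAt x x' t) (hy : HasDerivAt y y' t) (h : ∀ s, L (x s) (y s) = 0) :
    L (x t) y' + L x' (y t) = 0 := by
  have hzero : HasDerivAt (fun s => L (x s) (y s)) 0 t := by
    simpa only [h] using hasDerivAt_const t (0 : ℝ)
  exact (L.hasDerivAt_of_bilinear (fun _ => hx) (fun _ => hy)).unique hzero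

theorem hasDerivAt_apply_self_eq_zero (hL : ∀ a b, L a b = L b a) {x : ℝ → E} {x' : E}
    {t : ℝ} (hx : HasDerivAt x x' t) (h : L x' (x t) = 0) :
    HasDerivAt (fun s => L (x s) (x s)) 0 t := by
  have hderiv := L.hasDerivAt_of_bilinear (fun _ => hx) (fun _ => hx)
  rwa [hL (x t) x', h, add_zero] at hderiv

end ContinuousLinearMap

theorem eq_of_hasDerivAt_zero_of_hasDerivAt_zero {F : Type*} [NormedAddCommGroup F]
    [NormedSpace ℝ F] {f : ℝ → ℝ → F}
    (hu : ∀ u v, HasDerivAt (fun u' => f u' v) 0 u) (hv : ∀ u v, HasDerivAt (f u) 0 v)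
    (u v u' v' : ℝ) : f u v = f u' v' :=
  calc f u v = f u' v :=
        is_const_of_deriv_eq_zero (fun s => (hu s v).differentiableAt)
          (fun s => (hu s v).deriv) u u'
    _ = f u' v' :=
        is_const_of_deriv_eq_zero (fun s => (hv u' s).differentiableAt)
          (fun s => (hv u' s).deriv) v v'

section DiagonalForm

variable {ι : Type*} [Fintype ι]

noncomputable def diagonalForm (η : ι → ℝ) : (ι → ℝ) →L[ℝ] (ι → ℝ) →L[ℝ] ℝ :=
  ∑ i, η i • (ContinuousLinearMap.mul ℝ ℝ).bilinearComp
    (ContinuousLinearMap.proj i) (ContinuousLinearMap.proj i)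

theorem diagonalForm_apply (η : ι → ℝ) (x y : ι → ℝ) :
    diagonalForm η x y = ∑ i, η i * x i * y i := by
  simp [diagonalForm, mul_assoc]

theorem diagonalForm_comm (η : ι → ℝ) (x y : ι → ℝ) :
    diagonalForm η x y = diagonalForm η y x := by
  simp only [diagonalForm_apply, mul_right_comm]

end DiagonalForm

theorem stmt_16_general (m : ℕ) (η : Fin m → ℝ)
    (B : (Fin m → ℝ) → (Fin m → ℝ) → ℝ)
    (hBdef : ∀ x y, B x y = ∑ i, η i * x i * y i)
    (ψ Y Yu Yv Yuv ψu ψv : ℝ → ℝ → Fin m → ℝ)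
    (hYuv : ∀ u v i, HasDerivAt (fun u' => Yv u' v i) (Yuv u v i) u)
    (hψu : ∀ u v i, HasDerivAt (fun u' => ψ u' v i) (ψu u v i) u)
    (hψv : ∀ u v i, HasDerivAt (fun v' => ψ u v' i) (ψv u v i) v)
    (hYvYv : ∀ u v, B (Yv u v) (Yv u v) = 0)
    (hYYv : ∀ u v, B (Y u v) (Yv u v) = 0)
    (hψY : ∀ u v, B (ψ u v) (Y u v) = 0)
    (hψYu : ∀ u v, B (ψ u v) (Yu u v) = 0)
    (hψYv : ∀ u v, B (ψ u v) (Yv u v) = 0)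
    (hspanu : ∀ u v, ψu u v ∈ Submodule.span ℝ {Y u v, Yv u v})
    (hspanv : ∀ u v, ψv u v ∈ Submodule.span ℝ {Y u v, Yu u v}) :
    (∀ u v, B (ψ u v) (Yuv u v) = 0)
    ∧ (∀ u v u' v', B (ψ u v) (ψ u v) = B (ψ u' v') (ψ u' v')) := by
  set L := diagonalForm η
  obtain rfl : B = fun x y => L x y :=
    funext₂ fun x y => (hBdef x y).trans (diagonalForm_apply η x y).symm
  have hL := diagonalForm_comm η
  have hYuv' u v := hasDerivAt_pi.2 (hYuv u v)
  have hψu' u v := hasDerivAt_pi.2 (hψu u v)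
  have hψv' u v := hasDerivAt_pi.2 (hψv u v)
  refine ⟨fun u v => ?_, eq_of_hasDerivAt_zero_of_hasDerivAt_zero (fun u v => ?_) (fun u v => ?_)⟩
  · have hsum := L.apply_add_apply_eq_zero_of_hasDerivAt (hψu' u v) (hYuv' u v) (hψYv · v)
    have hψuYv := L.apply_eq_zero_of_mem_span_pair (hspanu u v) (hYYv u v) (hYvYv u v)
    simpa [hψuYv] using hsum
  · refine L.hasDerivAt_apply_self_eq_zero hL (hψu' u v) ?_
    exact L.apply_eq_zero_of_mem_span_pair (hspanu u v)
      ((hL _ _).trans (hψY u v)) ((hL _ _).trans (hψYv u v))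
  · refine L.hasDerivAt_apply_self_eq_zero hL (hψv' u v) ?_
    exact L.apply_eq_zero_of_mem_span_pair (hspanv u v)
      ((hL _ _).trans (hψY u v)) ((hL _ _).trans (hψYu u v))

/-- If `ψ ⊥ {Y, Y_u, Y_v}` and `ψ_u ∈ Span{Y,Y_v}`, `ψ_v ∈ Span{Y,Y_u}`, where `Y` is a
canonical null lift, then `⟨ψ, Y_{uv}⟩ = 0` (so `ψ` is a normal section) and `⟨ψ,ψ⟩` is
constant. -/
theorem stmt_16 (m : ℕ) (η : Fin m → ℝ) (hη : ∀ i, η i = 1 ∨ η i = -1)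
    (B : (Fin m → ℝ) → (Fin m → ℝ) → ℝ)
    (hBdef : ∀ x y, B x y = ∑ i, η i * x i * y i)
    (ψ Y Yu Yv Yuv ψu ψv : ℝ → ℝ → Fin m → ℝ)
    (hYu : ∀ u v i, HasDerivAt (fun u' => Y u' v i) (Yu u v i) u)
    (hYv : ∀ u v i, HasDerivAt (fun v' => Y u v' i) (Yv u v i) v)
    (hYuv : ∀ u v i, HasDerivAt (fun u' => Yv u' v i) (Yuv u v i) u)
    (hψu : ∀ u v i, HasDerivAt (fun u' => ψ u' v i) (ψu u v i) u)
    (hψv : ∀ u v i, HasDerivAt (fun v' => ψ u v' i) (ψv u v i) v)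
    (hYY : ∀ u v, B (Y u v) (Y u v) = 0)
    (hYuYu : ∀ u v, B (Yu u v) (Yu u v) = 0)
    (hYvYv : ∀ u v, B (Yv u v) (Yv u v) = 0)
    (hYuYv : ∀ u v, B (Yu u v) (Yv u v) = 1/2)
    (hYYu : ∀ u v, B (Y u v) (Yu u v) = 0)
    (hYYv : ∀ u v, B (Y u v) (Yv u v) = 0)
    (hψY : ∀ u v, B (ψ u v) (Y u v) = 0)
    (hψYu : ∀ u v, B (ψ u v) (Yu u v) = 0)
    (hψYv : ∀ u v, B (ψ u v) (Yv u v) = 0)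
    (hspanu : ∀ u v, ψu u v ∈ Submodule.span ℝ {Y u v, Yv u v})
    (hspanv : ∀ u v, ψv u v ∈ Submodule.span ℝ {Y u v, Yu u v}) :
    (∀ u v, B (ψ u v) (Yuv u v) = 0)
    ∧ (∀ u v u' v', B (ψ u v) (ψ u v) = B (ψ u' v') (ψ u' v')) :=
  stmt_16_general m η B hBdef ψ Y Yu Yv Yuv ψu ψv hYuv hψu hψv hYvYv hYYv hψY hψYu hψYv hspanu
    hspanv
end

section
/- Let θ₁, θ₂ be smooth real functions on a connected domain and suppose a vector-valued map Ŷ satisfies Ŷ_{uv} = Ŷ_{vu} where Ŷ_u = bŶ + θ₁(Y_v + aY) and Ŷ_v = aŶ + θ₂(Y_u + bY), with Y satisfying the structure equations Y_{uu} = −(s₁/2)Y + κ₁, Y_{vv} = −(s₂/2)Y + κ₂, Y_{uv} = −⟨κ₁,κ₂⟩Y + (1/2)N, and κ₁ = ±κ₂ pointwise with κ₁ nowhere zero and κ₁ not in Span{Y, Y_u, Y_v, Ŷ, N}-degenerate directions (i.e., the coefficients of κ₁, κ₂, Y_u, Y_v in the frame expansion can be compared). Then θ₁ = ±θ₂, θ₁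 is independent of v, θ₂ is independent of u (hence both are constants), and a_u = b_v. -/
/-!
Differentiating `Ŷ_u` in `v` and `Ŷ_v` in `u` by the product rule, and substituting the system
for `Ŷ` and the structure equations for `Y_uu`, `Y_vv` (where `κ₂ = ε κ₁` because `ε² = 1`),
writes `Ŷ_uv = Ŷ_vu` as two expansions in the frame `Y, Ŷ, Y_u, Y_v, κ₁`. Comparing the
coefficients of `Ŷ`, `Y_u`, `Y_v` and `κ₁` gives `a_u = b_v`, `θ₂ᵤ = 0`, `θ₁ᵥ = 0` and
`ε θ₁ = θ₂`.
-/

/-- `h` is `Ŷ_vu = Ŷ_uv`, each side expanded by the product rule, with `Y_vv = p₂ Y + κ₂` and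
`Y_uu = p₁ Y + κ₁`. -/
theorem darboux_compatibility {R E : Type*} [CommRing R] [AddCommGroup E] [Module R E]
    {Y Ŷ Yu Yv κ₁ κ₂ : E} (hLI : LinearIndependent R ![Y, Ŷ, Yu, Yv, κ₁])
    {ε a b θ₁ θ₂ p₁ p₂ au av bu bv θ₁v θ₂u : R} (hε : ε * ε = 1) (hκ : κ₁ = ε • κ₂)
    (h : b • (a • Ŷ + θ₂ • (Yu + b • Y)) + bv • Ŷ
        + (θ₁ • (p₂ • Y + κ₂ + (a • Yv + av • Y)) + θ₁v • (Yv + a • Y))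
      = a • (b • Ŷ + θ₁ • (Yv + a • Y)) + au • Ŷ
        + (θ₂ • (p₁ • Y + κ₁ + (b • Yu + bu • Y)) + θ₂u • (Yu + b • Y))) :
    θ₁ = ε * θ₂ ∧ θ₁v = 0 ∧ θ₂u = 0 ∧ au = bv := by
  have hκ₂ : κ₂ = ε • κ₁ := by rw [hκ, smul_smul, hε, one_smul]
  rw [hκ₂] at h
  have hsum : ∑ i, ![b * θ₂ * b + θ₁ * p₂ + θ₁ * av + θ₁v * a
        - (a * θ₁ * a + θ₂ * p₁ + θ₂ * bu + θ₂u * b),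
      bv - au, -θ₂u, θ₁v, ε * θ₁ - θ₂] i • ![Y, Ŷ, Yu, Yv, κ₁] i = 0 := by
    simp only [Fin.sum_univ_five, Matrix.cons_val]
    linear_combination (norm := module) h
  have hc := Fintype.linearIndependent_iff.mp hLI _ hsum
  have hŶ : bv - au = 0 := hc 1
  have hYu : -θ₂u = 0 := hc 2
  have hYv : θ₁v = 0 := hc 3
  have hκ₁ : ε * θ₁ - θ₂ = 0 := hc 4
  exact ⟨by linear_combination ε * hκ₁ - θ₁ * hε, hYv, neg_eq_zero.mp hYu,
    (sub_eq_zero.mp hŶ).symm⟩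

theorem stmt_19_general (m : ℕ)
    (Y Yhat Yu Yv N κ₁ κ₂ : ℝ → ℝ → Fin m → ℝ)
    (a b θ₁ θ₂ s₁ s₂ au av bu bv θ₁v θ₂u : ℝ → ℝ → ℝ)
    (ε : ℝ) (hεpm : ε = 1 ∨ ε = -1)
    (hκ : ∀ u v, κ₁ u v = ε • κ₂ u v)
    (hLI : ∀ u v, LinearIndependent ℝ ![Y u v, Yhat u v, Yu u v, Yv u v, N u v, κ₁ u v])
    -- first and second derivatives of Y (structure equations)
    (hYu : ∀ u v i, HasDerivAt (fun u' => Y u' v i) (Yu u v i) u)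
    (hYv : ∀ u v i, HasDerivAt (fun v' => Y u v' i) (Yv u v i) v)
    (hYuu : ∀ u v i, HasDerivAt (fun u' => Yu u' v i)
      (-(s₁ u v)/2 * Y u v i + κ₁ u v i) u)
    (hYvv : ∀ u v i, HasDerivAt (fun v' => Yv u v' i)
      (-(s₂ u v)/2 * Y u v i + κ₂ u v i) v)
    -- partial derivatives of the coefficient functions
    (hau : ∀ u v, HasDerivAt (fun u' => a u' v) (au u v) u)
    (hav : ∀ u v, HasDerivAt (fun v' => a u v') (av u v) v)
    (hbu : ∀ u v, HasDerivAt (fun u' => b u' v) (bu u v) u)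
    (hbv : ∀ u v, HasDerivAt (fun v' => b u v') (bv u v) v)
    (hθ₁v : ∀ u v, HasDerivAt (fun v' => θ₁ u v') (θ₁v u v) v)
    (hθ₂u : ∀ u v, HasDerivAt (fun u' => θ₂ u' v) (θ₂u u v) u)
    -- the first-order system satisfied by the Darboux transform
    (Yhatu Yhatv : ℝ → ℝ → Fin m → ℝ)
    (hYhatu : ∀ u v, Yhatu u v = b u v • Yhat u v + θ₁ u v • (Yv u v + a u v • Y u v))
    (hYhatv : ∀ u v, Yhatv u v = a u v • Yhat u v + θ₂ u v • (Yu u v + b u v • Y u v))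
    (hYhatud : ∀ u v i, HasDerivAt (fun u' => Yhat u' v i) (Yhatu u v i) u)
    (hYhatvd : ∀ u v i, HasDerivAt (fun v' => Yhat u v' i) (Yhatv u v i) v)
    -- equality of the mixed second partial derivatives Ŷ_{uv} = Ŷ_{vu}
    (W : ℝ → ℝ → Fin m → ℝ)
    (hWuv : ∀ u v i, HasDerivAt (fun v' => Yhatu u v' i) (W u v i) v)
    (hWvu : ∀ u v i, HasDerivAt (fun u' => Yhatv u' v i) (W u v i) u) :
    ∀ u v, θ₁ u v = ε * θ₂ u v ∧ θ₁v u v = 0 ∧ θ₂u u v = 0 ∧ au u v = bv u v := by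
  intro u v
  have hε : ε * ε = 1 := by rcases hεpm with rfl | rfl <;> norm_num
  have hframe : LinearIndependent ℝ ![Y u v, Yhat u v, Yu u v, Yv u v, κ₁ u v] := by
    convert (hLI u v).comp ![0, 1, 2, 3, 5] (by decide) using 1
    funext i
    fin_cases i <;> rfl
  obtain rfl : Yhatu = fun u v => b u v • Yhat u v + θ₁ u v • (Yv u v + a u v • Y u v) :=
    funext fun u => funext (hYhatu u)
  obtain rfl : Yhatv = fun u v => a u v • Yhat u v + θ₂ u v • (Yu u v + b u v • Y u v) :=
    funext fun u => funext (hYhatv u)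
  have hWv := (hasDerivAt_pi.2 (hWuv u v)).unique
    (((hbv u v).smul (hasDerivAt_pi.2 (hYhatvd u v))).add ((hθ₁v u v).smul
      ((hasDerivAt_pi.2 (hYvv u v)).add ((hav u v).smul (hasDerivAt_pi.2 (hYv u v))))))
  have hWu := (hasDerivAt_pi.2 (hWvu u v)).unique
    (((hau u v).smul (hasDerivAt_pi.2 (hYhatud u v))).add ((hθ₂u u v).smul
      ((hasDerivAt_pi.2 (hYuu u v)).add ((hbu u v).smul (hasDerivAt_pi.2 (hYu u v))))))
  exact darboux_compatibility hframe hε (hκ u v) (hWv.symm.trans hWu)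

/-- Proposition 4.2(ii): comparing the mixed second derivatives of a Darboux transform
`Ŷ` (with `Ŷ_u = bŶ + θ₁(Y_v + aY)`, `Ŷ_v = aŶ + θ₂(Y_u + bY)`) expanded in the frame
`{Y, Ŷ, Y_u, Y_v, N, κ}`, using the structure equations of the `(±)`-isothermic lift
`Y` (`κ₁ = ε κ₂`, `ε = ±1`, `κ₁` nowhere zero, frame pointwise linearly independent),
forces `θ₁ = ε θ₂`, `∂_v θ₁ = 0`, `∂_u θ₂ = 0` (so `θ₁, θ₂` are constants) and
`∂_u a = ∂_v b`. -/
theorem stmt_19 (m : ℕ) (η : Fin m → ℝ) (hη : ∀ i, η i = 1 ∨ η i = -1)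
    (B : (Fin m → ℝ) → (Fin m → ℝ) → ℝ)
    (hBdef : ∀ x y, B x y = ∑ i, η i * x i * y i)
    (Y Yhat Yu Yv N κ₁ κ₂ : ℝ → ℝ → Fin m → ℝ)
    (a b θ₁ θ₂ s₁ s₂ au av bu bv θ₁v θ₂u : ℝ → ℝ → ℝ)
    (ε : ℝ) (hεpm : ε = 1 ∨ ε = -1)
    (hκ : ∀ u v, κ₁ u v = ε • κ₂ u v)
    (hκ0 : ∀ u v, κ₁ u v ≠ 0)
    (hLI : ∀ u v, LinearIndependent ℝ ![Y u v, Yhat u v, Yu u v, Yv u v, N u v, κ₁ u v])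
    -- first and second derivatives of Y (structure equations)
    (hYu : ∀ u v i, HasDerivAt (fun u' => Y u' v i) (Yu u v i) u)
    (hYv : ∀ u v i, HasDerivAt (fun v' => Y u v' i) (Yv u v i) v)
    (hYuu : ∀ u v i, HasDerivAt (fun u' => Yu u' v i)
      (-(s₁ u v)/2 * Y u v i + κ₁ u v i) u)
    (hYvv : ∀ u v i, HasDerivAt (fun v' => Yv u v' i)
      (-(s₂ u v)/2 * Y u v i + κ₂ u v i) v)
    (hYuv : ∀ u v i, HasDerivAt (fun v' => Yu u v' i)
      (-(B (κ₁ u v) (κ₂ u v)) * Y u v i + (1/2) * N u v i) v)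
    (hYvu : ∀ u v i, HasDerivAt (fun u' => Yv u' v i)
      (-(B (κ₁ u v) (κ₂ u v)) * Y u v i + (1/2) * N u v i) u)
    -- partial derivatives of the coefficient functions
    (hau : ∀ u v, HasDerivAt (fun u' => a u' v) (au u v) u)
    (hav : ∀ u v, HasDerivAt (fun v' => a u v') (av u v) v)
    (hbu : ∀ u v, HasDerivAt (fun u' => b u' v) (bu u v) u)
    (hbv : ∀ u v, HasDerivAt (fun v' => b u v') (bv u v) v)
    (hθ₁v : ∀ u v, HasDerivAt (fun v' => θ₁ u v') (θ₁v u v) v)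
    (hθ₂u : ∀ u v, HasDerivAt (fun u' => θ₂ u' v) (θ₂u u v) u)
    -- the first-order system satisfied by the Darboux transform
    (Yhatu Yhatv : ℝ → ℝ → Fin m → ℝ)
    (hYhatu : ∀ u v, Yhatu u v = b u v • Yhat u v + θ₁ u v • (Yv u v + a u v • Y u v))
    (hYhatv : ∀ u v, Yhatv u v = a u v • Yhat u v + θ₂ u v • (Yu u v + b u v • Y u v))
    (hYhatud : ∀ u v i, HasDerivAt (fun u' => Yhat u' v i) (Yhatu u v i) u)
    (hYhatvd : ∀ u v i, HasDerivAt (fun v' => Yhat u v' i) (Yhatv u v i) v)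
    -- equality of the mixed second partial derivatives Ŷ_{uv} = Ŷ_{vu}
    (W : ℝ → ℝ → Fin m → ℝ)
    (hWuv : ∀ u v i, HasDerivAt (fun v' => Yhatu u v' i) (W u v i) v)
    (hWvu : ∀ u v i, HasDerivAt (fun u' => Yhatv u' v i) (W u v i) u) :
    ∀ u v, θ₁ u v = ε * θ₂ u v ∧ θ₁v u v = 0 ∧ θ₂u u v = 0 ∧ au u v = bv u v :=
  stmt_19_general m Y Yhat Yu Yv N κ₁ κ₂ a b θ₁ θ₂ s₁ s₂ au av bu bv θ₁v θ₂u ε hεpm hκ hLI hYu hYv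
    hYuu hYvv hau hav hbu hbv hθ₁v hθ₂u Yhatu Yhatv hYhatu hYhatv hYhatud hYhatvd W hWuv hWvu
end
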